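/- arXiv:1004.2797 — 3 statements merged into one kernel-verified Lean document; each statement's English description precedes it below -/
import Mathlib

section
/- If a smooth cubic surface over a field K has a point defined over a separable quadratic extension of K, then it has a K-rational point. -/
/-!
Write `L = K ⊕ Kα` and the given point as `x = u + α v` with `u, v ∈ K⁴`; the line through `x`
and its conjugate is the `K`-line spanned by `u` and `v`. If `F v = 0`, then `v` (or `u`, when
`v = 0`) is a rational point. Otherwise `p(T) = F(u + T v)` is a cubic over `K` vanishing at `α`,
so the quadratic minimal polynomial of `α` divides it and the remaining linear factor has a root
`r ∈ K`; `u + r v` is the third intersection point, and it is nonzero because `x` is not a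
multiple of `v`.
-/

open MvPolynomial Finset

section RestrictLine

variable {σ R A : Type*} [CommSemiring R] [CommSemiring A] [Algebra R A]

theorem MvPolynomial.IsHomogeneous.aeval_fin_two {q : MvPolynomial (Fin 2) R} {n : ℕ}
    (hq : q.IsHomogeneous n) (t s : A) :
    MvPolynomial.aeval ![t, s] q =
      ∑ kl ∈ antidiagonal n,
        algebraMap R A ((MvPolynomial.aeval ![Polynomial.X, 1] q).coeff kl.1) *
          t ^ kl.1 * s ^ kl.2 := by
  conv_lhs => rw [← Polynomial.homogenize_eq_of_isHomogeneous hq rfl]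
  simp [Polynomial.homogenize, MvPolynomial.aeval_monomial, mul_assoc]

noncomputable def MvPolynomial.restrictLine (P : MvPolynomial σ R) (u v : σ → R) :
    Polynomial R :=
  MvPolynomial.aeval (fun k => Polynomial.C (u k) + Polynomial.C (v k) * Polynomial.X) P

theorem MvPolynomial.aeval_restrictLine (P : MvPolynomial σ R) (u v : σ → R) (a : A) :
    Polynomial.aeval a (P.restrictLine u v) =
      MvPolynomial.aeval (fun k => algebraMap R A (u k) + algebraMap R A (v k) * a) P := by
  rw [restrictLine, ← AlgHom.comp_apply, MvPolynomial.comp_aeval]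
  simp

theorem MvPolynomial.IsHomogeneous.aeval_line {P : MvPolynomial σ R} {n : ℕ}
    (hP : P.IsHomogeneous n) (u v : σ → R) (s t : A) :
    MvPolynomial.aeval (fun k => algebraMap R A (u k) * s + algebraMap R A (v k) * t) P =
      ∑ kl ∈ antidiagonal n,
        algebraMap R A ((P.restrictLine u v).coeff kl.1) * t ^ kl.1 * s ^ kl.2 := by
  set q : MvPolynomial (Fin 2) R := MvPolynomial.aeval (fun k => C (u k) * X 1 + C (v k) * X 0) P
  have hq : q.IsHomogeneous n := by
    simpa using hP.aeval _ fun k => (isHomogeneous_C_mul_X _ _).add (isHomogeneous_C_mul_X _ _)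
  have hq_eval : MvPolynomial.aeval ![t, s] q =
      MvPolynomial.aeval (fun k => algebraMap R A (u k) * s + algebraMap R A (v k) * t) P := by
    rw [← AlgHom.comp_apply, MvPolynomial.comp_aeval]
    simp
  have hq_dehomogenize : MvPolynomial.aeval ![Polynomial.X, 1] q = P.restrictLine u v := by
    rw [restrictLine, ← AlgHom.comp_apply, MvPolynomial.comp_aeval]
    simp
  rw [← hq_eval, hq.aeval_fin_two, hq_dehomogenize]

theorem MvPolynomial.IsHomogeneous.natDegree_restrictLine_le {P : MvPolynomial σ R} {n : ℕ}
    (hP : P.IsHomogeneous n) (u v : σ → R) : (P.restrictLine u v).natDegree ≤ n := by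
  have h := hP.aeval_line u v (1 : Polynomial R) Polynomial.X
  simp only [mul_one, one_pow, Polynomial.algebraMap_eq] at h
  rw [show P.restrictLine u v = _ from h]
  refine Polynomial.natDegree_sum_le_of_forall_le _ _ fun kl hkl => ?_
  exact (Polynomial.natDegree_C_mul_X_pow_le _ _).trans
    (Finset.HasAntidiagonal.antidiagonal.fst_le hkl)

theorem MvPolynomial.IsHomogeneous.aeval_algebraMap_mul_eq_coeff {P : MvPolynomial σ R} {n : ℕ}
    (hP : P.IsHomogeneous n) (u v : σ → R) (t : A) :
    MvPolynomial.aeval (fun k => algebraMap R A (v k) * t) P =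
      algebraMap R A ((P.restrictLine u v).coeff n) * t ^ n := by
  have h := hP.aeval_line u v 0 t
  simp only [mul_zero, zero_add] at h
  rw [h, Finset.sum_eq_single_of_mem (n, 0) (by simp)]
  · simp
  · rintro ⟨k, l⟩ hkl hne
    have hl : l ≠ 0 := by rintro rfl; simp_all
    simp [hl]

theorem MvPolynomial.IsHomogeneous.coeff_restrictLine {P : MvPolynomial σ R} {n : ℕ}
    (hP : P.IsHomogeneous n) (u v : σ → R) : (P.restrictLine u v).coeff n = eval v P := by
  simpa using (hP.aeval_algebraMap_mul_eq_coeff u v (1 : R)).symm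

theorem MvPolynomial.IsHomogeneous.aeval_algebraMap_mul {P : MvPolynomial σ R} {n : ℕ}
    (hP : P.IsHomogeneous n) (v : σ → R) (t : A) :
    MvPolynomial.aeval (fun k => algebraMap R A (v k) * t) P =
      algebraMap R A (eval v P) * t ^ n := by
  rw [hP.aeval_algebraMap_mul_eq_coeff 0 v, hP.coeff_restrictLine]

end RestrictLine

section QuadraticExtension

variable {K L : Type*} [Field K] [Field L] [Algebra K L]

theorem Polynomial.exists_isRoot_of_natDegree_eq_three_of_aeval_eq_zero {p : Polynomial K}
    (hp : p.natDegree = 3) {α : L} (hα : (minpoly K α).natDegree = 2)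
    (hpα : Polynomial.aeval α p = 0) : ∃ r : K, p.IsRoot r := by
  obtain ⟨q, rfl⟩ := minpoly.dvd K α hpα
  have hμ : minpoly K α ≠ 0 := by rintro h; simp [h] at hα
  have hq : q ≠ 0 := by rintro rfl; simp at hp
  rw [Polynomial.natDegree_mul hμ hq, hα] at hp
  obtain ⟨r, hr⟩ := Polynomial.exists_root_of_degree_eq_one
    ((Polynomial.degree_eq_iff_natDegree_eq (n := 1) hq).2 (by omega))
  exact ⟨r, by simp [hr.eq_zero]⟩

theorem exists_natDegree_minpoly_eq_two_of_finrank_eq_two (hquad : Module.finrank K L = 2) :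
    ∃ α : L, (minpoly K α).natDegree = 2 ∧
      ∀ y : L, ∃ a b : K, algebraMap K L a + algebraMap K L b * α = y := by
  have : FiniteDimensional K L := Module.finite_of_finrank_pos (by omega)
  obtain ⟨α, hα⟩ : ∃ α : L, α ∉ Set.range (algebraMap K L) := by
    by_contra! h
    have hbot : (⊥ : Subalgebra K L) = ⊤ := eq_top_iff.2 fun y _ => Algebra.mem_bot.2 (h y)
    have := Subalgebra.bot_eq_top_iff_finrank_eq_one.1 hbot
    omega
  refine ⟨α, ?_, fun y => ?_⟩
  · have hle := hquad ▸ minpoly.natDegree_le (A := K) α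
    have hpos := minpoly.natDegree_pos (IsIntegral.of_finite K α)
    have hne : (minpoly K α).natDegree ≠ 1 := fun h => hα (minpoly.natDegree_eq_one_iff.1 h)
    omega
  · have hli : LinearIndependent K ![1, α] :=
      (LinearIndependent.pair_iff' one_ne_zero).2 fun a h =>
        hα ⟨a, by simpa [Algebra.smul_def] using h⟩
    have hspan := hli.span_eq_top_of_card_eq_finrank (by rw [Fintype.card_fin, hquad])
    have hy : y ∈ Submodule.span K {1, α} := by
      rw [← Matrix.range_cons_cons_empty 1 α ![], hspan]
      trivial
    obtain ⟨a, b, hab⟩ := Submodule.mem_span_pair.1 hy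
    exact ⟨a, b, by simpa [Algebra.smul_def] using hab⟩

theorem MvPolynomial.IsHomogeneous.exists_eval_eq_zero_of_aeval_eq_zero {σ : Type*}
    {F : MvPolynomial σ K} (hF : F.IsHomogeneous 3) {α : L} (hα : (minpoly K α).natDegree = 2)
    {u v : σ → K} (huv : u ≠ 0 ∨ v ≠ 0)
    (hx : MvPolynomial.aeval (fun k => algebraMap K L (u k) + algebraMap K L (v k) * α) F = 0) :
    ∃ w : σ → K, w ≠ 0 ∧ eval w F = 0 := by
  by_cases hFv : eval v F = 0
  · by_cases hv : v = 0
    · subst hv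
      refine ⟨u, huv.resolve_right (not_not.2 rfl), ?_⟩
      have h := hF.aeval_algebraMap_mul (A := L) u 1
      simp only [Pi.zero_apply, map_zero, zero_mul, add_zero, mul_one, one_pow] at hx h
      exact (algebraMap K L).injective (by rw [← h, hx, map_zero])
    · exact ⟨v, hv, hFv⟩
  have hp : (F.restrictLine u v).natDegree = 3 :=
    Polynomial.natDegree_eq_of_le_of_coeff_ne_zero (hF.natDegree_restrictLine_le u v)
      (by rwa [hF.coeff_restrictLine])
  obtain ⟨r, hr⟩ := Polynomial.exists_isRoot_of_natDegree_eq_three_of_aeval_eq_zero hp hα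
    (by rwa [aeval_restrictLine])
  refine ⟨u + r • v, fun h => ?_, ?_⟩
  · -- otherwise `x = (α - r) • v`, and `F x = (α - r) ^ 3 * F v ≠ 0`
    have hxv : (fun k => algebraMap K L (u k) + algebraMap K L (v k) * α) =
        fun k => algebraMap K L (v k) * (α - algebraMap K L r) := by
      funext k
      rw [eq_neg_of_add_eq_zero_left (congrFun h k)]
      simp only [Pi.smul_apply, smul_eq_mul, map_neg, map_mul]
      ring
    have hαr : α - algebraMap K L r ≠ 0 :=
      sub_ne_zero.2 fun h => by
        simpa using (minpoly.natDegree_eq_one_iff.2 ⟨r, h.symm⟩).symm.trans hα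
    rw [hxv, hF.aeval_algebraMap_mul] at hx
    simp [hFv, hαr] at hx
  · rw [show u + r • v = fun k => u k + v k * r from _root_.funext fun k => by simp [mul_comm]]
    simpa using (aeval_restrictLine (A := K) F u v r).symm.trans hr

end QuadraticExtension

theorem smooth_cubic_surface_point_of_quadratic_point_general
    (K L : Type*) [Field K] [Field L] [Algebra K L]
    (hquad : Module.finrank K L = 2)
    (F : MvPolynomial (Fin 4) K) (hhom : F.IsHomogeneous 3)
    (hL : ∃ x : Fin 4 → L, x ≠ 0 ∧ MvPolynomial.eval x (F.map (algebraMap K L)) = 0) :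
    ∃ x : Fin 4 → K, x ≠ 0 ∧ MvPolynomial.eval x F = 0 := by
  obtain ⟨x, hx0, hxF⟩ := hL
  obtain ⟨α, hα, hspan⟩ := exists_natDegree_minpoly_eq_two_of_finrank_eq_two hquad
  choose u v huv using fun k => hspan (x k)
  obtain rfl : (fun k => algebraMap K L (u k) + algebraMap K L (v k) * α) = x := funext huv
  refine hhom.exists_eval_eq_zero_of_aeval_eq_zero hα ?_ (by rwa [eval_map, ← aeval_def] at hxF)
  by_contra! h
  obtain ⟨rfl, rfl⟩ := h
  exact hx0 (funext fun k => by simp)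

/-- If a smooth cubic surface `X ⊂ ℙ³_K` (given by a nonzero homogeneous cubic
form `F`, smooth in the sense that the partial derivatives of `F` have no common
nontrivial zero over an algebraic closure) has a point over a separable
quadratic extension `L/K`, then it has a `K`-rational point. -/
theorem smooth_cubic_surface_point_of_quadratic_point
    (K L : Type*) [Field K] [Field L] [Algebra K L] [Algebra.IsSeparable K L]
    (hquad : Module.finrank K L = 2)
    (F : MvPolynomial (Fin 4) K) (hF : F ≠ 0) (hhom : F.IsHomogeneous 3)
    (hsmooth : ∀ x : Fin 4 → AlgebraicClosure K, x ≠ 0 →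
      ¬ (∀ i : Fin 4, MvPolynomial.eval x
        (MvPolynomial.pderiv i (F.map (algebraMap K (AlgebraicClosure K)))) = 0))
    (hL : ∃ x : Fin 4 → L, x ≠ 0 ∧ MvPolynomial.eval x (F.map (algebraMap K L)) = 0) :
    ∃ x : Fin 4 → K, x ≠ 0 ∧ MvPolynomial.eval x F = 0 :=
  smooth_cubic_surface_point_of_quadratic_point_general K L hquad F hhom hL
end

section
/- If a smooth cubic surface over a field K has a point defined over a field obtained from K by a finite tower of separable quadratic extensions, then X has a K-rational point. -/
/-!
Let `L/K` be separable quadratic with conjugation `σ`, and let `x ≠ 0` be an `L`-zero of the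
cubic form `P`. If `σ x` is proportional to `x`, a rescaling of `x` is `σ`-invariant, hence
`K`-rational. Otherwise `x` and `σ x` span a line defined over `K`, on which `P` restricts to a
binary cubic with two conjugate zeros; its remaining zero (or any point, if `P` vanishes on the
line) is again proportional to its conjugate, and descends. Induction along the tower finishes.
-/

def chainRingHom (Ks : ℕ → Type*) [∀ i, Field (Ks i)]
    (f : ∀ i : ℕ, Ks i →+* Ks (i + 1)) : ∀ n : ℕ, Ks 0 →+* Ks n
  | 0 => RingHom.id _
  | n + 1 => (f n).comp (chainRingHom Ks f n)

theorem Algebra.IsQuadraticExtension.exists_involution (K L : Type*) [Field K] [Field L]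
    [Algebra K L] [IsQuadraticExtension K L] [Algebra.IsSeparable K L] :
    ∃ σ : Gal(L/K), (∀ z, σ (σ z) = z) ∧
      ∀ z, σ z = z → z ∈ Set.range (algebraMap K L) := by
  have : FiniteDimensional K L :=
    .of_finrank_pos (by simp [IsQuadraticExtension.finrank_eq_two])
  have hcard : Nat.card Gal(L/K) = 2 := by
    rw [IsGalois.card_aut_eq_finrank, IsQuadraticExtension.finrank_eq_two]
  obtain ⟨σ, -, hσ⟩ := (Nat.card_eq_two_iff' 1).1 hcard
  refine ⟨σ, fun z => ?_, fun z hz =>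
    (IsGalois.mem_range_algebraMap_iff_fixed z).2 fun g => ?_⟩
  · have : σ * σ = 1 := by rw [← sq, ← hcard, pow_card_eq_one']
    exact DFunLike.congr_fun this z
  · obtain rfl | hg := eq_or_ne g 1
    · rfl
    · rwa [hσ g hg]

namespace MvPolynomial

variable {ι R S : Type*}

def HasNontrivialZero [CommSemiring R] (P : MvPolynomial ι R) : Prop :=
  ∃ x : ι → R, x ≠ 0 ∧ eval x P = 0

theorem HasNontrivialZero.of_map_ringEquiv [CommSemiring R] [CommSemiring S]
    {P : MvPolynomial ι R} (e : R ≃+* S) (h : (P.map (e : R →+* S)).HasNontrivialZero) :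
    P.HasNontrivialZero := by
  obtain ⟨x, hx, hPx⟩ := h
  refine ⟨e.symm ∘ x, fun h0 => hx ?_, e.injective ?_⟩
  · funext i
    simpa using congrArg e (congrFun h0 i)
  · change (e : R →+* S) _ = _
    rw [map_zero, ← hPx, eval_map, eval₂_comp]
    congr 1
    ext; simp

open Finset in
theorem IsHomogeneous.eval₂_smul [CommSemiring R] [CommSemiring S] {P : MvPolynomial ι R}
    {m : ℕ} (hP : P.IsHomogeneous m) (f : R →+* S) (c : S) (g : ι → S) :
    MvPolynomial.eval₂ f (c • g) P = c ^ m * MvPolynomial.eval₂ f g P := by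
  rw [eval₂_eq, eval₂_eq, mul_sum]
  refine sum_congr rfl fun d hd => ?_
  have hdeg : d.degree = m := by
    by_contra h
    exact mem_support_iff.1 hd (hP.coeff_eq_zero h)
  simp only [Pi.smul_apply, smul_eq_mul, mul_pow, prod_mul_distrib, prod_pow_eq_pow_sum,
    ← Finsupp.degree_apply, hdeg]
  ring

open Finset in
theorem IsHomogeneous.eval_fin_two [CommSemiring R] {G : MvPolynomial (Fin 2) R} {n : ℕ}
    (hG : G.IsHomogeneous n) (s t : R) :
    eval ![s, t] G = ∑ p ∈ antidiagonal n,
      G.coeff (Finsupp.single 0 p.1 + Finsupp.single 1 p.2) * s ^ p.1 * t ^ p.2 := by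
  set e : ℕ × ℕ → (Fin 2 →₀ ℕ) := fun p => Finsupp.single 0 p.1 + Finsupp.single 1 p.2
  have he : Function.Injective e := fun p q h => by
    have h0 := DFunLike.congr_fun h 0
    have h1 := DFunLike.congr_fun h 1
    simp [e] at h0 h1
    exact Prod.ext h0 h1
  have hsupp : G.support ⊆ (antidiagonal n).image e := by
    intro d hd
    have hdeg : d 0 + d 1 = n := by
      rw [← Fin.sum_univ_two, ← Finsupp.degree_eq_sum]
      by_contra h
      exact mem_support_iff.1 hd (hG.coeff_eq_zero h)
    refine mem_image.2 ⟨(d 0, d 1), mem_antidiagonal.2 hdeg, ?_⟩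
    ext i
    fin_cases i <;> simp [e]
  rw [eval_eq', sum_subset hsupp fun d _ hd => by rw [notMem_support_iff.1 hd, zero_mul],
    sum_image fun p _ q _ h => he h]
  refine sum_congr rfl fun p _ => ?_
  simp [e, mul_assoc]

noncomputable def restrictLine_s1 [CommSemiring R] [CommSemiring S] (f : R →+* S) (u v : ι → S)
    (P : MvPolynomial ι R) : MvPolynomial (Fin 2) S :=
  MvPolynomial.eval₂ (C.comp f) (fun j => C (u j) * X 0 + C (v j) * X 1) P

section restrictLine_s1

variable [CommSemiring R] [CommSemiring S] (f : R →+* S) (u v : ι → S) (P : MvPolynomial ι R)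

theorem eval_restrictLine (s t : S) :
    eval ![s, t] (restrictLine_s1 f u v P) = eval₂ f (s • u + t • v) P := by
  rw [restrictLine_s1, eval₂_comp_left]
  congr 1
  · ext; simp
  · funext j; simp [mul_comm]

theorem IsHomogeneous.restrictLine_s1 {m : ℕ} (hP : P.IsHomogeneous m) :
    (MvPolynomial.restrictLine_s1 f u v P).IsHomogeneous m := by
  simpa [MvPolynomial.restrictLine_s1] using hP.eval₂ (C.comp f) _ (fun r => isHomogeneous_C _ _)
    fun j => (isHomogeneous_C_mul_X _ _).add (isHomogeneous_C_mul_X _ _)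

theorem map_restrictLine {T : Type*} [CommSemiring T] (k : S →+* T) :
    map k (restrictLine_s1 f u v P) = restrictLine_s1 (k.comp f) (k ∘ u) (k ∘ v) P := by
  rw [restrictLine_s1, restrictLine_s1, eval₂_comp_left (map k)]
  congr 1
  · ext; simp
  · funext j; simp

theorem rename_swap_restrictLine :
    rename (Equiv.swap 0 1) (restrictLine_s1 f u v P) = restrictLine_s1 f v u P := by
  rw [restrictLine_s1, restrictLine_s1, ← AlgHom.coe_toRingHom, eval₂_comp_left]
  congr 1
  · ext; simp
  · funext j; simp [add_comm]

end restrictLine_s1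

theorem coeff_rename_swap_fin_two [CommSemiring R] (G : MvPolynomial (Fin 2) R) (a b : ℕ) :
    (rename (Equiv.swap 0 1) G).coeff (Finsupp.single 0 a + Finsupp.single 1 b) =
      G.coeff (Finsupp.single 0 b + Finsupp.single 1 a) := by
  have hswap : Finsupp.mapDomain (Equiv.swap 0 1) (Finsupp.single 0 b + Finsupp.single 1 a) =
      Finsupp.single (0 : Fin 2) a + Finsupp.single 1 b := by
    simp [Finsupp.mapDomain_add, add_comm]
  rw [← hswap, coeff_rename_mapDomain _ (Equiv.swap 0 1).injective]

section Involution

variable {K L : Type*} [Field K] [Field L] [Algebra K L] {P : MvPolynomial ι K}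
  (σ : L ≃ₐ[K] L)

theorem hasNontrivialZero_of_conj_eq_smul {m : ℕ} (hP : P.IsHomogeneous m)
    (hfix : ∀ z, σ z = z → z ∈ Set.range (algebraMap K L)) {w : ι → L} (hw : w ≠ 0)
    (hPw : eval₂ (algebraMap K L) w P = 0) {μ : L} (hμ : ⇑σ ∘ w = μ • w) :
    P.HasNontrivialZero := by
  have hσw (j : ι) : σ (w j) = μ * w j := congrFun hμ j
  obtain ⟨j₀, hj₀⟩ := Function.ne_iff.1 hw
  have hμ0 : μ ≠ 0 := by
    rintro rfl
    exact hj₀ (by simpa using hσw j₀)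
  have hfixed (j : ι) : σ ((w j₀)⁻¹ * w j) = (w j₀)⁻¹ * w j := by
    rw [map_mul, map_inv₀, hσw, hσw]
    field_simp
  choose z hz using fun j => hfix _ (hfixed j)
  refine ⟨z, fun h0 => ?_, (algebraMap K L).injective ?_⟩
  · have := hz j₀
    rw [h0, Pi.zero_apply, map_zero, inv_mul_cancel₀ hj₀] at this
    exact zero_ne_one this
  · have hz' : algebraMap K L ∘ z = (w j₀)⁻¹ • w := _root_.funext hz
    rw [map_zero, eval₂_comp, hz', hP.eval₂_smul, hPw, mul_zero]

theorem HasNontrivialZero.of_map_of_involution (hP : P.IsHomogeneous 3) (hσ : ∀ z, σ (σ z) = z)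
    (hfix : ∀ z, σ z = z → z ∈ Set.range (algebraMap K L))
    (h : (P.map (algebraMap K L)).HasNontrivialZero) : P.HasNontrivialZero := by
  obtain ⟨x, hx, hPx⟩ := h
  rw [eval_map] at hPx
  by_cases hdep : ∃ μ : L, μ • x = ⇑σ ∘ x
  · obtain ⟨μ, hμ⟩ := hdep
    exact hasNontrivialZero_of_conj_eq_smul σ hP hfix hx hPx hμ.symm
  have hind := LinearIndependent.pair_iff.1 <|
    (LinearIndependent.pair_iff' hx).2 fun μ hμ => hdep ⟨μ, hμ⟩
  have hcomm : (σ : L →+* L).comp (algebraMap K L) = algebraMap K L := RingHom.ext σ.commutes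
  have hPσx : eval₂ (algebraMap K L) (⇑σ ∘ x) P = 0 := by
    have := congrArg (σ : L →+* L) hPx
    rw [eval₂_comp_left, map_zero, hcomm] at this
    exact this
  set G := restrictLine_s1 (algebraMap K L) x (⇑σ ∘ x) P
  have hGeval (s t : L) :
      eval ![s, t] G = eval₂ (algebraMap K L) (s • x + t • (⇑σ ∘ x)) P :=
    eval_restrictLine _ _ _ _ s t
  set b := G.coeff (Finsupp.single 0 2 + Finsupp.single 1 1)
  set c := G.coeff (Finsupp.single 0 1 + Finsupp.single 1 2)
  have hcubic (s t : L) : eval ![s, t] G =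
      G.coeff (Finsupp.single 0 3) * s ^ 3 + b * s ^ 2 * t + c * s * t ^ 2 +
        G.coeff (Finsupp.single 1 3) * t ^ 3 := by
    rw [(hP.restrictLine_s1 _ _ _).eval_fin_two]
    simp only [Finset.Nat.sum_antidiagonal_succ, Finset.Nat.antidiagonal_zero, Finset.sum_singleton,
      Finsupp.single_zero, add_zero, zero_add, pow_zero, mul_one]
    ring
  have hG10 : G.coeff (Finsupp.single 0 3) = 0 := by
    simpa [hPx] using (hcubic 1 0).symm.trans (hGeval 1 0)
  have hG01 : G.coeff (Finsupp.single 1 3) = 0 := by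
    simpa [hPσx] using (hcubic 0 1).symm.trans (hGeval 0 1)
  have hsym : map (σ : L →+* L) G = rename (Equiv.swap 0 1) G := by
    rw [map_restrictLine, rename_swap_restrictLine, hcomm]
    congr 1
    exact _root_.funext fun j => hσ (x j)
  have hbc : σ b = c := by
    have := congrArg (coeff (Finsupp.single 0 2 + Finsupp.single 1 1)) hsym
    rwa [coeff_map, coeff_rename_swap_fin_two] at this
  have hcb : σ c = b := by rw [← hbc, hσ]
  -- `G` vanishes at `(1, 0)` and `(0, 1)`, so `G = s t (b s + c t)` with `c = σ b`; its third
  -- zero `(c, -b)` gives the point `y = c x - b σ x`, and `σ y = -y`.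
  obtain ⟨s, t, μ, hst, hGst, hσs, hσt⟩ : ∃ s t μ : L,
      (s ≠ 0 ∨ t ≠ 0) ∧ eval ![s, t] G = 0 ∧ σ s = μ * t ∧ σ t = μ * s := by
    by_cases hbc0 : b = 0 ∧ c = 0
    · refine ⟨1, 1, 1, by simp, ?_, by simp, by simp⟩
      simp [hcubic, hG10, hG01, hbc0]
    · refine ⟨c, -b, -1, ?_, ?_, by simp [hcb], by simp [hbc]⟩
      · rw [neg_ne_zero]
        tauto
      · rw [hcubic, hG10, hG01]
        ring
  refine hasNontrivialZero_of_conj_eq_smul σ hP hfix (w := s • x + t • (⇑σ ∘ x)) ?_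
    ((hGeval s t).symm.trans hGst) (μ := μ) ?_
  · intro h0
    have := hind s t h0
    tauto
  · funext j
    simp [hσs, hσt, hσ]
    ring

end Involution

theorem HasNontrivialZero.of_map_quadraticExtension {K L : Type*} [Field K] [Field L] [Algebra K L]
    [Algebra.IsQuadraticExtension K L] [Algebra.IsSeparable K L] {P : MvPolynomial ι K}
    (hP : P.IsHomogeneous 3) (h : (P.map (algebraMap K L)).HasNontrivialZero) :
    P.HasNontrivialZero :=
  have ⟨σ, hσ, hfix⟩ := Algebra.IsQuadraticExtension.exists_involution K L
  HasNontrivialZero.of_map_of_involution σ hP hσ hfix h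

theorem HasNontrivialZero.of_map_chainRingHom (Ks : ℕ → Type*) [∀ i, Field (Ks i)]
    (f : ∀ i : ℕ, Ks i →+* Ks (i + 1)) (n : ℕ)
    (hsep : ∀ i < n, @Algebra.IsSeparable (Ks i) (Ks (i + 1)) _ _ (f i).toAlgebra)
    (hquad : ∀ i < n, @Module.finrank (Ks i) (Ks (i + 1)) _ _
      (@Algebra.toModule _ _ _ _ (f i).toAlgebra) = 2)
    {P : MvPolynomial ι (Ks 0)} (hP : P.IsHomogeneous 3)
    (h : (P.map (chainRingHom Ks f n)).HasNontrivialZero) : P.HasNontrivialZero := by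
  induction n with
  | zero => rwa [chainRingHom, map_id] at h
  | succ n ih =>
    let := (f n).toAlgebra
    have := hsep n n.lt_add_one
    have : Algebra.IsQuadraticExtension (Ks n) (Ks (n + 1)) := ⟨hquad n n.lt_add_one⟩
    refine ih (fun i hi => hsep i (by omega)) (fun i hi => hquad i (by omega)) ?_
    refine .of_map_quadraticExtension (L := Ks (n + 1)) (hP.map _) ?_
    rwa [MvPolynomial.map_map]

end MvPolynomial

theorem smooth_cubic_surface_point_of_quadratic_tower_point_general
    (K : Type*) [Field K] (n : ℕ)
    (Ks : ℕ → Type*) [∀ i, Field (Ks i)]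
    (e : K ≃+* Ks 0)
    (f : ∀ i : ℕ, Ks i →+* Ks (i + 1))
    (hsep : ∀ i < n, @Algebra.IsSeparable (Ks i) (Ks (i + 1)) _ _ (f i).toAlgebra)
    (hquad : ∀ i < n, @Module.finrank (Ks i) (Ks (i + 1)) _ _
      (@Algebra.toModule _ _ _ _ (f i).toAlgebra) = 2)
    (F : MvPolynomial (Fin 4) K) (hhom : F.IsHomogeneous 3)
    (htop : ∃ x : Fin 4 → Ks n, x ≠ 0 ∧
      MvPolynomial.eval x (F.map ((chainRingHom Ks f n).comp (e : K →+* Ks 0))) = 0) :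
    ∃ x : Fin 4 → K, x ≠ 0 ∧ MvPolynomial.eval x F = 0 :=
  MvPolynomial.HasNontrivialZero.of_map_ringEquiv e <|
    .of_map_chainRingHom Ks f n hsep hquad (hhom.map _) <| by rwa [MvPolynomial.map_map]

/-- If a smooth cubic surface over a field `K` has a point defined over a field
obtained from `K` by a finite tower of separable quadratic extensions
`K = K₀ ⊂ K₁ ⊂ ⋯ ⊂ Kₙ`, then it has a `K`-rational point. -/
theorem smooth_cubic_surface_point_of_quadratic_tower_point
    (K : Type*) [Field K] (n : ℕ)
    (Ks : ℕ → Type*) [∀ i, Field (Ks i)]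
    (e : K ≃+* Ks 0)
    (f : ∀ i : ℕ, Ks i →+* Ks (i + 1))
    (hsep : ∀ i < n, @Algebra.IsSeparable (Ks i) (Ks (i + 1)) _ _ (f i).toAlgebra)
    (hquad : ∀ i < n, @Module.finrank (Ks i) (Ks (i + 1)) _ _
      (@Algebra.toModule _ _ _ _ (f i).toAlgebra) = 2)
    (F : MvPolynomial (Fin 4) K) (hF : F ≠ 0) (hhom : F.IsHomogeneous 3)
    (hsmooth : ∀ x : Fin 4 → AlgebraicClosure K, x ≠ 0 →
      ¬ (∀ i : Fin 4, MvPolynomial.eval x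
        (MvPolynomial.pderiv i (F.map (algebraMap K (AlgebraicClosure K)))) = 0))
    (htop : ∃ x : Fin 4 → Ks n, x ≠ 0 ∧
      MvPolynomial.eval x (F.map ((chainRingHom Ks f n).comp (e : K →+* Ks 0))) = 0) :
    ∃ x : Fin 4 → K, x ≠ 0 ∧ MvPolynomial.eval x F = 0 :=
  smooth_cubic_surface_point_of_quadratic_tower_point_general K n Ks e f hsep hquad F hhom htop
end

section
/- Let F be a finite field, K = F(t), and X a smooth cubic surface over K defined by f + t g = 0 with f, g nonproportional cubic forms over F and char F ≠ 3. If the curve Γ : f = g = 0 in P^3_F has a closed point of degree a power of 2, then X has a K-rational point. -/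
open MvPolynomial

/-- The cubic form `f + t·g` over `K = F(t)`, an element of `K[X₀,X₁,X₂,X₃]`. -/
noncomputable def pencilForm (F : Type*) [Field F]
    (f g : MvPolynomial (Fin 4) F) : MvPolynomial (Fin 4) (RatFunc F) :=
  MvPolynomial.map (algebraMap F (RatFunc F)) f +
    C RatFunc.X * MvPolynomial.map (algebraMap F (RatFunc F)) g

/-!
Let `L = 𝔽_{q^{2^m}}` carry the common zero `x` of `f` and `g`, and let `τ` be the `q`-Frobenius
acting on the coefficients of `L[t]`. Then `x` is a zero of `f + t g` over `L[t]` fixed by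
`τ^{2^m}`, and one descends one step at a time (secant argument): if a zero `A` is fixed by `σ²`,
the line through `A` and `σ A` is `σ`-stable, so either it lies on the cubic surface or its third
point of intersection with it is `σ`-invariant. A zero fixed by `τ` itself has its coordinates
in `F[t]`.
-/

lemma Finsupp.exists_prod_pow_eq_mul_mul_of_degree_eq_three {ι R : Type*} [CommMonoid R]
    {d : ι →₀ ℕ} (hd : d.degree = 3) :
    ∃ a b c : ι, ∀ z : ι → R, (d.prod fun i k => z i ^ k) = z a * z b * z c := by
  have hcard : Multiset.card d.toMultiset = 3 := by
    rw [Finsupp.card_toMultiset, ← hd, Finsupp.degree]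
    rfl
  obtain ⟨a, b, c, habc⟩ := Multiset.card_eq_three.mp hcard
  refine ⟨a, b, c, fun z => ?_⟩
  have hprod : (d.toMultiset.map z).prod = d.prod fun i k => z i ^ k := by
    rw [Finsupp.toMultiset_map, Finsupp.prod_toMultiset]
    exact Finsupp.prod_mapDomain_index (fun _ => pow_zero _) (fun _ _ _ => pow_add _ _ _)
  simp [← hprod, habc, mul_assoc]

namespace MvPolynomial

variable {ι R : Type*} [CommRing R]

lemma IsHomogeneous.eval_smul {φ : MvPolynomial ι R} {n : ℕ} (hφ : φ.IsHomogeneous n) (r : R)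
    (x : ι → R) : eval (r • x) φ = r ^ n * eval x φ := by
  rw [φ.as_sum, map_sum, map_sum, Finset.mul_sum]
  refine Finset.sum_congr rfl fun d hd => ?_
  have hdeg : (d.prod fun _ k => r ^ k) = r ^ n := by
    rw [← hφ (mem_support_iff.mp hd), Finsupp.weight_apply, Finsupp.prod,
      Finset.prod_pow_eq_pow_sum]
    simp [Finsupp.sum]
  simp only [eval_monomial, Pi.smul_apply, smul_eq_mul, mul_pow, Finsupp.prod_mul, hdeg]
  ring

lemma IsHomogeneous.exists_eval_smul_add_smul {φ : MvPolynomial ι R} (hφ : φ.IsHomogeneous 3)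
    (x y : ι → R) : ∃ c₀ c₁ c₂ c₃ : R, ∀ u v : R,
      eval (u • x + v • y) φ = c₀ * u ^ 3 + c₁ * u ^ 2 * v + c₂ * u * v ^ 2 + c₃ * v ^ 3 := by
  classical
  rw [φ.as_sum]
  refine Finset.sum_induction _ (fun p => ∃ c₀ c₁ c₂ c₃ : R, ∀ u v : R,
      eval (u • x + v • y) p = c₀ * u ^ 3 + c₁ * u ^ 2 * v + c₂ * u * v ^ 2 + c₃ * v ^ 3)
    ?_ ⟨0, 0, 0, 0, fun u v => by simp⟩ fun d hd => ?_
  · rintro p q ⟨a₀, a₁, a₂, a₃, hp⟩ ⟨b₀, b₁, b₂, b₃, hq⟩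
    exact ⟨a₀ + b₀, a₁ + b₁, a₂ + b₂, a₃ + b₃, fun u v => by rw [map_add, hp, hq]; ring⟩
  · obtain ⟨a, b, c, habc⟩ := Finsupp.exists_prod_pow_eq_mul_mul_of_degree_eq_three (R := R)
      (by rw [Finsupp.degree_eq_weight_one]; exact hφ (mem_support_iff.mp hd))
    refine ⟨coeff d φ * (x a * x b * x c),
      coeff d φ * (x a * x b * y c + x a * y b * x c + y a * x b * x c),
      coeff d φ * (x a * y b * y c + y a * x b * y c + y a * y b * x c),
      coeff d φ * (y a * y b * y c), fun u v => ?_⟩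
    rw [eval_monomial, habc]
    simp only [Pi.add_apply, Pi.smul_apply, smul_eq_mul]
    ring

def HasInvariantZero (σ : R →+* R) (φ : MvPolynomial ι R) : Prop :=
  ∃ B : ι → R, B ≠ 0 ∧ eval B φ = 0 ∧ ∀ i, σ (B i) = B i

variable {σ : R →+* R} {φ : MvPolynomial ι R}

lemma eval_comp_of_map_eq_self (hσφ : map σ φ = φ) (z : ι → R) :
    eval (σ ∘ z) φ = σ (eval z φ) := by
  rw [map_eval, hσφ]

section Secant

variable [IsDomain R]

lemma mul_eq_mul_of_smul_eq_smul {A A' : ι → R} {a b : R} (ha : a ≠ 0) (h : a • A = b • A')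
    (i j : ι) : A i * A' j = A j * A' i := by
  have hi := congrFun h i
  have hj := congrFun h j
  simp only [Pi.smul_apply, smul_eq_mul] at hi hj
  exact mul_left_cancel₀ ha (by linear_combination A' j * hi - A' i * hj)

/-- Apply `σ` to the restriction of `φ` at the `σ`-fixed parameters `v / u = 1` and `v / u = w`. -/
lemma apply_coeff_eq_of_eval_line (hσφ : map σ φ = φ) {w : R} (hw : σ w = w) (hw0 : w ≠ 0)
    (hw1 : w ≠ 1) {A A' : ι → R} (hAA' : ∀ i, σ (A i) = A' i) (hA'A : ∀ i, σ (A' i) = A i)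
    {c₁ c₂ : R} (hc : ∀ u v : R, eval (u • A + v • A') φ = c₁ * u ^ 2 * v + c₂ * u * v ^ 2) :
    σ c₁ = c₂ ∧ σ c₂ = c₁ := by
  have hswap : ∀ v, σ v = v → σ c₁ * v + σ c₂ * v ^ 2 = c₁ * v ^ 2 + c₂ * v := by
    intro v hv
    have hline : σ ∘ ((1 : R) • A + v • A') = v • A + (1 : R) • A' := by
      ext i
      simp [hv, hAA', hA'A, add_comm]
    have h := eval_comp_of_map_eq_self hσφ ((1 : R) • A + v • A')
    rw [hline, hc v 1, hc 1 v] at h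
    simp only [map_add, map_mul, map_pow, map_one, hv] at h
    linear_combination -h
  have h1 := hswap 1 (map_one σ)
  have hw' := hswap w hw
  have he : (σ c₁ - c₂) * (w * (w - 1)) = 0 := by linear_combination w ^ 2 * h1 - hw'
  have he' := (mul_eq_zero.mp he).resolve_right (mul_ne_zero hw0 (sub_ne_zero.mpr hw1))
  exact ⟨by linear_combination he', by linear_combination h1 - he'⟩

lemma HasInvariantZero.of_proportional {n : ℕ} (hφ : φ.IsHomogeneous n) {A A' : ι → R}
    (hA0 : A ≠ 0) (hAφ : eval A φ = 0) (hAA' : ∀ i, σ (A i) = A' i) (hA'A : ∀ i, σ (A' i) = A i)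
    (hprop : ∀ i j, A i * A' j = A j * A' i) : HasInvariantZero σ φ := by
  obtain ⟨j, hj⟩ := Function.ne_iff.mp hA0
  have hA'j : A' j ≠ 0 := fun h0 => hj (by rw [← hA'A j, h0, map_zero, Pi.zero_apply])
  refine ⟨A' j • A, smul_ne_zero hA'j hA0, by rw [hφ.eval_smul, hAφ, mul_zero], fun i => ?_⟩
  simp only [Pi.smul_apply, smul_eq_mul, map_mul, hAA', hA'A]
  linear_combination (hprop i j).symm

/-- The secant argument: the line through a zero `A` of the cubic and its conjugate `σ A` is
`σ`-stable, so it is contained in the cubic surface or meets it in a third, `σ`-invariant point. -/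
theorem HasInvariantZero.of_comp_self (hφ : φ.IsHomogeneous 3) (hσφ : map σ φ = φ) {w : R}
    (hw : σ w = w) (hw0 : w ≠ 0) (hw1 : w ≠ 1) (h : HasInvariantZero (σ.comp σ) φ) :
    HasInvariantZero σ φ := by
  obtain ⟨A, hA0, hAφ, hσσ⟩ := h
  obtain ⟨A', hAA'⟩ : ∃ A' : ι → R, ∀ i, σ (A i) = A' i := ⟨σ ∘ A, fun _ => rfl⟩
  have hA'A : ∀ i, σ (A' i) = A i := fun i => by rw [← hAA', ← RingHom.comp_apply, hσσ]
  have hA'φ : eval A' φ = 0 := by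
    have hA' : A' = σ ∘ A := _root_.funext fun i => (hAA' i).symm
    rw [hA', eval_comp_of_map_eq_self hσφ, hAφ, map_zero]
  by_cases hprop : ∀ i j, A i * A' j = A j * A' i
  · exact .of_proportional hφ hA0 hAφ hAA' hA'A hprop
  have hnot_smul : ∀ {a b : R}, a ≠ 0 → a • A ≠ b • A' := fun ha h =>
    hprop (mul_eq_mul_of_smul_eq_smul ha h)
  obtain ⟨c₀, c₁, c₂, c₃, hc⟩ := hφ.exists_eval_smul_add_smul A A'
  have hc₀ : c₀ = 0 := by simpa [hAφ] using (hc 1 0).symm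
  have hc₃ : c₃ = 0 := by simpa [hA'φ] using (hc 0 1).symm
  have hline : ∀ u v : R, eval (u • A + v • A') φ = c₁ * u ^ 2 * v + c₂ * u * v ^ 2 := by
    intro u v
    rw [hc, hc₀, hc₃]
    ring
  obtain ⟨hσc₁, hσc₂⟩ := apply_coeff_eq_of_eval_line hσφ hw hw0 hw1 hAA' hA'A hline
  by_cases hc₂ : c₂ = 0
  · -- the whole line lies on the cubic
    refine ⟨(1 : R) • A + (1 : R) • A', ?_, by rw [hline, hc₂, ← hσc₂, hc₂, map_zero]; ring,
      fun i => ?_⟩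
    · rw [Ne, add_eq_zero_iff_eq_neg, ← neg_smul]
      exact hnot_smul one_ne_zero
    · simp [hAA', hA'A, add_comm]
  · obtain ⟨i₀, hi₀⟩ := Function.ne_iff.mp (fun h => hnot_smul (b := 1) one_ne_zero (by simpa))
    -- `μ` is anti-invariant, which makes the third point `c₂ A - c₁ σA` invariant after scaling
    set μ := A i₀ - A' i₀
    have hσμ : σ μ = -μ := by simp [μ, hAA', hA'A]
    refine ⟨μ • (c₂ • A + (-c₁) • A'), smul_ne_zero (sub_ne_zero.mpr hi₀) ?_, ?_, fun i => ?_⟩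
    · rw [Ne, add_eq_zero_iff_eq_neg, ← neg_smul, neg_neg]
      exact hnot_smul hc₂
    · rw [hφ.eval_smul, hline]
      ring
    · simp only [Pi.smul_apply, Pi.add_apply, smul_eq_mul, map_mul, map_add, map_neg, hσμ, hσc₁,
        hσc₂, hAA', hA'A]
      ring

theorem HasInvariantZero.of_pow_two_pow (hφ : φ.IsHomogeneous 3) {w : R} (hw0 : w ≠ 0)
    (hw1 : w ≠ 1) (m : ℕ) (hσφ : map σ φ = φ) (hw : σ w = w)
    (h : HasInvariantZero (σ ^ 2 ^ m) φ) : HasInvariantZero σ φ := by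
  induction m generalizing σ with
  | zero => simpa using h
  | succ m ih =>
    refine .of_comp_self hφ hσφ hw hw0 hw1 (ih ?_ ?_ ?_)
    · rw [← map_map, hσφ, hσφ]
    · simp [hw]
    · rwa [← RingHom.mul_def, ← sq, ← pow_mul, ← pow_succ']

end Secant

section Pencil

variable {F : Type*} [CommRing F] {S : Type*} [CommRing S] [Algebra F R] [Algebra F S]

noncomputable def pencil (R : Type*) [CommRing R] [Algebra F R] (f g : MvPolynomial ι F) (t : R) :
    MvPolynomial ι R :=
  map (algebraMap F R) f + C t * map (algebraMap F R) g

variable {f g : MvPolynomial ι F}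

lemma isHomogeneous_pencil {n : ℕ} (hf : f.IsHomogeneous n) (hg : g.IsHomogeneous n) (t : R) :
    (pencil R f g t).IsHomogeneous n :=
  (hf.map _).add (by simpa using (isHomogeneous_C ι t).mul (hg.map (algebraMap F R)))

lemma eval_pencil (z : ι → R) (t : R) : eval z (pencil R f g t) = aeval z f + t * aeval z g := by
  simp [pencil, eval_map, aeval_def]

lemma map_pencil (ψ : R →ₐ[F] S) (t : R) :
    map (ψ : R →+* S) (pencil R f g t) = pencil S f g (ψ t) := by
  simp [pencil, map_map]

lemma eval_comp_pencil (ψ : R →ₐ[F] S) (z : ι → R) (t : R) :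
    eval (ψ ∘ z) (pencil S f g (ψ t)) = ψ (eval z (pencil R f g t)) := by
  rw [← map_pencil]
  exact (map_eval (ψ : R →+* S) z _).symm

end Pencil

end MvPolynomial

namespace FiniteField

variable {F L : Type*} [Field F] [Fintype F] [Field L] [Algebra F L]

theorem iterate_frobeniusAlgHom_finrank [Fintype L] (z : L) :
    (frobeniusAlgHom F L)^[Module.finrank F L] z = z := by
  rw [coe_frobeniusAlgHom, pow_iterate, ← Module.card_eq_pow_finrank]
  exact pow_card z

theorem mem_range_algebraMap_of_pow_card_eq_self [Finite L] {z : L}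
    (hz : z ^ Fintype.card F = z) : z ∈ Set.range (algebraMap F L) := by
  rw [IsGalois.mem_range_algebraMap_iff_fixed]
  intro e
  obtain ⟨n, rfl⟩ := (bijective_frobeniusAlgEquivOfAlgebraic_pow F L).2 e
  rw [AlgEquiv.coe_pow, coe_frobeniusAlgEquivOfAlgebraic]
  exact Function.iterate_fixed hz _

theorem mem_lifts_of_map_frobeniusAlgHom_eq_self [Finite L] {p : Polynomial L}
    (hp : p.map (frobeniusAlgHom F L : L →+* L) = p) : p ∈ Polynomial.lifts (algebraMap F L) := by
  refine (Polynomial.lifts_iff_coeff_lifts p).mpr fun n =>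
    mem_range_algebraMap_of_pow_card_eq_self ?_
  simpa using congrArg (Polynomial.coeff · n) hp

end FiniteField

namespace MvPolynomial

open scoped Polynomial

variable {F L ι : Type*} [Field F] [Field L] [Algebra F L]

theorem hasInvariantZero_pencil_of_aeval_eq_zero [Fintype F] [Fintype L]
    {f g : MvPolynomial ι F} {x : ι → L} (hx0 : x ≠ 0) (hxf : aeval x f = 0)
    (hxg : aeval x g = 0) :
    HasInvariantZero ((Polynomial.mapAlgHom (FiniteField.frobeniusAlgHom F L) : L[X] →+* L[X]) ^
      Module.finrank F L) (pencil L[X] f g Polynomial.X) := by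
  let C' : L →ₐ[F] L[X] := Polynomial.CAlgHom
  refine ⟨fun i => C' (x i), fun h => hx0 ?_, ?_, fun i => ?_⟩
  · ext i
    simpa [C'] using congrFun h i
  · rw [eval_pencil, ← comp_aeval_apply, ← comp_aeval_apply, hxf, hxg]
    simp
  · have hsemi : Function.Semiconj C' (FiniteField.frobeniusAlgHom F L)
        (Polynomial.mapAlgHom (FiniteField.frobeniusAlgHom F L)) :=
      fun c => (Polynomial.map_C _).symm
    rw [RingHom.coe_pow]
    exact (hsemi.iterate_right _ (x i)).symm.trans
      (congrArg C' (FiniteField.iterate_frobeniusAlgHom_finrank (x i)))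

theorem exists_ne_zero_eval_pencilForm_eq_zero {f g : MvPolynomial (Fin 4) F} {B : Fin 4 → L[X]}
    (hB0 : B ≠ 0) (hB : eval B (pencil L[X] f g Polynomial.X) = 0)
    (hlifts : ∀ i, B i ∈ Polynomial.lifts (algebraMap F L)) :
    ∃ x : Fin 4 → RatFunc F, x ≠ 0 ∧ eval x (pencilForm F f g) = 0 := by
  choose B₀ hB₀ using fun i => Polynomial.mem_lifts _ |>.mp (hlifts i)
  let incl : F[X] →ₐ[F] L[X] := Polynomial.mapAlgHom (Algebra.ofId F L)
  have hinclB₀ : incl ∘ B₀ = B := _root_.funext hB₀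
  have hB₀φ : eval B₀ (pencil F[X] f g Polynomial.X) = 0 := by
    have hinj : Function.Injective incl := Polynomial.map_injective _ (algebraMap F L).injective
    apply hinj
    rw [map_zero, ← eval_comp_pencil, hinclB₀]
    simpa [incl] using hB
  let ρ := IsScalarTower.toAlgHom F F[X] (RatFunc F)
  refine ⟨ρ ∘ B₀, fun h => hB0 (hinclB₀ ▸ ?_), ?_⟩
  · ext i : 1
    have hB₀i : B₀ i = 0 := RatFunc.algebraMap_injective F (by simpa [ρ] using congrFun h i)
    simp [hB₀i]
  · have hpencil : pencilForm F f g = pencil (RatFunc F) f g (ρ Polynomial.X) := by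
      simp only [ρ, IsScalarTower.coe_toAlgHom', RatFunc.algebraMap_X]
      rfl
    rw [hpencil, eval_comp_pencil, hB₀φ, map_zero]

end MvPolynomial

theorem cubic_pencil_rational_point_of_two_power_point_on_base_locus_general
    (F : Type*) [Field F] [Fintype F]
    (f g : MvPolynomial (Fin 4) F)
    (hf : f.IsHomogeneous 3) (hg : g.IsHomogeneous 3)
    (hΓ : ∃ (m : ℕ) (L : IntermediateField F (AlgebraicClosure F)),
      Module.finrank F L = 2 ^ m ∧
      ∃ x : Fin 4 → L, x ≠ 0 ∧ aeval x f = 0 ∧ aeval x g = 0) :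
    ∃ x : Fin 4 → RatFunc F, x ≠ 0 ∧ eval x (pencilForm F f g) = 0 := by
  obtain ⟨m, L, hrank, x, hx0, hxf, hxg⟩ := hΓ
  have : FiniteDimensional F L := .of_finrank_pos (by rw [hrank]; positivity)
  have : Finite L := Module.finite_of_finite F
  have : Fintype L := .ofFinite L
  let τ := Polynomial.mapAlgHom (FiniteField.frobeniusAlgHom F L)
  have hτX : τ Polynomial.X = Polynomial.X := Polynomial.map_X _
  obtain ⟨B, hB0, hBφ, hBτ⟩ := HasInvariantZero.of_pow_two_pow (isHomogeneous_pencil hf hg _)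
    Polynomial.X_ne_zero (Polynomial.X_ne_C 1) m ((map_pencil τ _).trans (by rw [hτX])) hτX
    (hrank ▸ hasInvariantZero_pencil_of_aeval_eq_zero hx0 hxf hxg)
  exact exists_ne_zero_eval_pencilForm_eq_zero hB0 hBφ fun i =>
    FiniteField.mem_lifts_of_map_frobeniusAlgHom_eq_self (hBτ i)

/-- Let `F` be a finite field with `char F ≠ 3`, `K = F(t)`, and `X ⊂ ℙ³_K` the
smooth cubic surface defined by `f + t·g = 0` with `f`, `g` nonproportional
cubic forms over `F`. If the curve `Γ : f = g = 0` in `ℙ³_F` has a closed point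
of degree a power of 2 (i.e. a nontrivial common zero of `f` and `g` in an
extension of `F` of degree `2^m`), then `X` has a `K`-rational point. -/
theorem cubic_pencil_rational_point_of_two_power_point_on_base_locus
    (F : Type*) [Field F] [Fintype F] (hchar : ringChar F ≠ 3)
    (f g : MvPolynomial (Fin 4) F)
    (hf : f.IsHomogeneous 3) (hg : g.IsHomogeneous 3)
    (hnonprop : ∀ c : F, g ≠ c • f ∧ f ≠ c • g)
    (hsmooth : ∀ x : Fin 4 → AlgebraicClosure (RatFunc F), x ≠ 0 →
      ¬ (∀ i : Fin 4, eval x (pderiv i ((pencilForm F f g).map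
        (algebraMap (RatFunc F) (AlgebraicClosure (RatFunc F))))) = 0))
    (hΓ : ∃ (m : ℕ) (L : IntermediateField F (AlgebraicClosure F)),
      Module.finrank F L = 2 ^ m ∧
      ∃ x : Fin 4 → L, x ≠ 0 ∧ aeval x f = 0 ∧ aeval x g = 0) :
    ∃ x : Fin 4 → RatFunc F, x ≠ 0 ∧ eval x (pencilForm F f g) = 0 :=
  cubic_pencil_rational_point_of_two_power_point_on_base_locus_general F f g hf hg hΓ
end
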